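/- Let z = x + iy be in the upper half-plane and let s ∈ ℂ with Re s > 1. Then ∑_{(m,n) ∈ ℤ²∖{(0,0)}} y^s / |mz + n|^{2s} = 2 ζ(2s) E(z,s), where ζ is the Riemann zeta function; equivalently, 2 ζ(2s) y^{−s} E(z,s) = ∑'_{m,n} Q(m,n)^{−s} for the positive-definite binary quadratic form Q(m,n) = m² − 2xmn + (x²+y²)n² = |m − nz|² with root z and discriminant −4y². -/

import Mathlib

open Real Complex MeasureTheory

/-- The Eisenstein–Maass series for the modular group,
`E(z,s) = (1/2) ∑_{(c,d) ∈ ℤ², gcd(c,d) = 1} (Im z)^s / |cz + d|^{2s}`,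
absolutely convergent for `Re s > 1`. -/
noncomputable def eisensteinMaass (z s : ℂ) : ℂ :=
  (1 / 2) * ∑' p : {q : ℤ × ℤ // Int.gcd q.1 q.2 = 1},
    (z.im : ℂ) ^ s / ((‖(p.1.1 : ℂ) * z + (p.1.2 : ℂ)‖ : ℂ)) ^ (2 * s)

/-!
Writing a nonzero pair as `k • (c, d)` with `k = gcd` and `(c, d)` coprime identifies
`ℤ² ∖ {0}` with `ℕ+ × {coprime pairs}`. The summand is homogeneous of degree `-2s`, so under
this identification the double sum factors as `∑ k^{-2s} = ζ(2s)` times the sum over coprime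
pairs, which is `2 E(z,s)`. Absolute convergence, needed to regroup, comes from the bound
`|cz + d| ≥ r(z) ‖(c, d)‖` of the holomorphic Eisenstein series theory.
-/

lemma Int.gcd_pos_of_pair_ne_zero {q : ℤ × ℤ} (hq : q ≠ 0) : 0 < Int.gcd q.1 q.2 :=
  Int.gcd_pos_iff.mpr <| by
    contrapose! hq
    exact Prod.ext hq.1 hq.2

def pnatSMulCoprimeEquiv : ℕ+ × {q : ℤ × ℤ // Int.gcd q.1 q.2 = 1} ≃ {q : ℤ × ℤ // q ≠ 0} where
  toFun p := ⟨((p.1 : ℕ) : ℤ) • p.2.1, by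
    refine smul_ne_zero (by exact_mod_cast p.1.ne_zero) fun h ↦ ?_
    simpa [h] using p.2.2⟩
  invFun q :=
    ⟨⟨Int.gcd q.1.1 q.1.2, Int.gcd_pos_of_pair_ne_zero q.2⟩,
      ⟨(q.1.1 / Int.gcd q.1.1 q.1.2, q.1.2 / Int.gcd q.1.1 q.1.2),
        Int.gcd_div_gcd_div_gcd (Int.gcd_pos_of_pair_ne_zero q.2)⟩⟩
  left_inv := by
    rintro ⟨k, ⟨⟨c, d⟩, hcd⟩⟩
    have hk : ((k : ℕ) : ℤ) ≠ 0 := by exact_mod_cast k.ne_zero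
    have hg : Int.gcd ((k : ℕ) * c) ((k : ℕ) * d) = k := by
      rw [Int.gcd_mul_left, hcd, mul_one, Int.natAbs_natCast]
    refine Prod.ext (PNat.eq ?_) (Subtype.ext (Prod.ext ?_ ?_)) <;>
      simp [hg, Int.mul_ediv_cancel_left _ hk]
  right_inv q := by
    ext
    · exact Int.mul_ediv_cancel' (Int.gcd_dvd_left _ _)
    · exact Int.mul_ediv_cancel' (Int.gcd_dvd_right _ _)

lemma riemannZeta_eq_tsum_pnat {s : ℂ} (hs : 1 < s.re) :
    riemannZeta s = ∑' k : ℕ+, 1 / ((k : ℕ) : ℂ) ^ s := by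
  rw [zeta_eq_tsum_one_div_nat_cpow hs, ← tsum_pnat_eq_tsum_of_eq_zero]
  simp [zero_cpow (Complex.ne_zero_of_one_lt_re hs)]

theorem tsum_ne_zero_eq_riemannZeta_mul_tsum_coprime {s : ℂ} (hs : 1 < s.re) {f : ℤ × ℤ → ℂ}
    (hf : Summable fun q : {q : ℤ × ℤ // q ≠ 0} ↦ f q)
    (hhom : ∀ (k : ℕ) (q : ℤ × ℤ), f ((k : ℤ) • q) = 1 / (k : ℂ) ^ s * f q) :
    ∑' q : {q : ℤ × ℤ // q ≠ 0}, f q =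
      riemannZeta s * ∑' q : {q : ℤ × ℤ // Int.gcd q.1 q.2 = 1}, f q := by
  have hprod : Summable fun p : ℕ+ × {q : ℤ × ℤ // Int.gcd q.1 q.2 = 1} ↦
      1 / ((p.1 : ℕ) : ℂ) ^ s * f p.2 :=
    (pnatSMulCoprimeEquiv.summable_iff.mpr hf).congr fun p ↦ hhom _ _
  calc ∑' q : {q : ℤ × ℤ // q ≠ 0}, f q
      = ∑' p : ℕ+ × {q : ℤ × ℤ // Int.gcd q.1 q.2 = 1}, 1 / ((p.1 : ℕ) : ℂ) ^ s * f p.2 := by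
        rw [← pnatSMulCoprimeEquiv.tsum_eq]
        exact tsum_congr fun p ↦ hhom _ _
    _ = ∑' k : ℕ+, ∑' q : {q : ℤ × ℤ // Int.gcd q.1 q.2 = 1}, 1 / ((k : ℕ) : ℂ) ^ s * f q :=
        hprod.tsum_prod
    _ = riemannZeta s * ∑' q : {q : ℤ × ℤ // Int.gcd q.1 q.2 = 1}, f q := by
        simp_rw [tsum_mul_left, riemannZeta_eq_tsum_pnat hs, tsum_mul_right]

lemma summable_norm_mul_add_rpow_neg (z : UpperHalfPlane) {σ : ℝ} (hσ : 2 < σ) :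
    Summable fun q : ℤ × ℤ ↦ ‖(q.1 : ℂ) * z + q.2‖ ^ (-σ) := by
  rw [← (finTwoArrowEquiv ℤ).summable_iff]
  exact ((EisensteinSeries.summable_one_div_norm_rpow hσ).mul_left _).of_nonneg_of_le
    (fun _ ↦ Real.rpow_nonneg (norm_nonneg _) _) (EisensteinSeries.summand_bound z (by linarith))

lemma summable_div_norm_mul_add_cpow (a : ℂ) (z : UpperHalfPlane) {s : ℂ} (hs : 2 < s.re) :
    Summable fun q : ℤ × ℤ ↦ a / (‖(q.1 : ℂ) * z + q.2‖ : ℂ) ^ s := by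
  refine ((summable_norm_mul_add_rpow_neg z hs).mul_left ‖a‖).of_norm_bounded fun q ↦ le_of_eq ?_
  rw [norm_div, norm_cpow_eq_rpow_re_of_nonneg (norm_nonneg _) (by linarith),
    Real.rpow_neg (norm_nonneg _), div_eq_mul_inv]

lemma div_norm_smul_mul_add_cpow (a z s : ℂ) (k : ℕ) (q : ℤ × ℤ) :
    a / (‖(((k : ℤ) • q).1 : ℂ) * z + ((k : ℤ) • q).2‖ : ℂ) ^ s =
      1 / (k : ℂ) ^ s * (a / (‖(q.1 : ℂ) * z + q.2‖ : ℂ) ^ s) := by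
  have hnorm : ‖(((k : ℤ) • q).1 : ℂ) * z + ((k : ℤ) • q).2‖ = k * ‖(q.1 : ℂ) * z + q.2‖ := by
    simp only [Prod.smul_fst, Prod.smul_snd, smul_eq_mul]
    rw [← Complex.norm_natCast k, ← norm_mul]
    push_cast
    ring_nf
  rw [hnorm, ofReal_mul, mul_cpow_ofReal_nonneg (Nat.cast_nonneg _) (norm_nonneg _),
    ofReal_natCast, div_mul_div_comm, one_mul, mul_comm]

/-- for `z` in the upper half-plane and `Re s > 1`,
`∑_{(m,n) ∈ ℤ² ∖ {0}} (Im z)^s / |mz + n|^{2s} = 2 ζ(2s) E(z,s)`. -/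
theorem epstein_zeta_eq_zeta_mul_eisenstein (z s : ℂ) (hz : 0 < z.im) (hs : 1 < s.re) :
    ∑' p : {q : ℤ × ℤ // q ≠ 0},
        (z.im : ℂ) ^ s / ((‖(p.1.1 : ℂ) * z + (p.1.2 : ℂ)‖ : ℂ)) ^ (2 * s) =
      2 * riemannZeta (2 * s) * eisensteinMaass z s := by
  set f : ℤ × ℤ → ℂ := fun q ↦ (z.im : ℂ) ^ s / (‖(q.1 : ℂ) * z + q.2‖ : ℂ) ^ (2 * s)
  have hsum : Summable f := summable_div_norm_mul_add_cpow _ ⟨z, hz⟩ (by simp; linarith)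
  rw [tsum_ne_zero_eq_riemannZeta_mul_tsum_coprime (f := f) (by simp; linarith)
    (hsum.comp_injective Subtype.val_injective) (div_norm_smul_mul_add_cpow _ z _), eisensteinMaass]
  ring
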